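/- Suppose all weights are equal to 1 (W_{kl} = 1 for all l > k) and γ, μ > 0. Fix (i,j), let Θ⋆_ij ∈ ℝ^K have at least one nonzero entry, let S = {k : Θ⋆_{k;ij} ≠ 0}, and let F be the adjugate matrix of B_{S_B:}ᵀ B_{S_B:}. Then for every index u ∈ {1,…,K} with Θ⋆_{u;ij} = 0: F_{uk} = det(B_{S_B:}ᵀ B_{S_B:})/|S| for every k ≠ u, and F_{uu} = (1 + γ²/μ²)·det(B_{S_B:}ᵀ B_{S_B:}) / (|S|·γ²/μ²). -/

import Mathlib

open scoped Classical
open Matrix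

/-- The Moore–Penrose pseudoinverse of a real matrix, characterized by the four Penrose
conditions (which determine it uniquely; it always exists for real matrices). -/
noncomputable def moorePenrose {m n : Type*} [Fintype m] [Fintype n]
    (B : Matrix m n ℝ) : Matrix n m ℝ :=
  if h : ∃ X : Matrix n m ℝ,
      B * X * B = B ∧ X * B * X = X ∧ (B * X)ᵀ = B * X ∧ (X * B)ᵀ = X * B then
    h.choose
  else 0

/-- The matrix `B = [(γ/μ)GA ; I_K]` for `q = 1`. -/
noncomputable def Bmat (K : ℕ) (W : Fin K → Fin K → ℝ) (γ μ : ℝ) :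
    Matrix ({p : Fin K × Fin K // p.1 < p.2} ⊕ Fin K) (Fin K) ℝ :=
  Matrix.of fun r c =>
    match r with
    | Sum.inl p => γ / μ * (W p.val.1 p.val.2 *
        (if c = p.val.1 then 1 else if c = p.val.2 then -1 else 0))
    | Sum.inr k => if c = k then 1 else 0

/-- The support `S_B` of `BΘ⋆`. -/
noncomputable def suppB (K : ℕ) (W : Fin K → Fin K → ℝ) (γ μ : ℝ) (Θ : Fin K → ℝ) :
    Finset ({p : Fin K × Fin K // p.1 < p.2} ⊕ Fin K) :=
  Finset.univ.filter fun r => ((Bmat K W γ μ) *ᵥ Θ) r ≠ 0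

/-- The submatrix `B_{S_B:}` of rows of `B` indexed by `S_B`. -/
noncomputable def BmatS (K : ℕ) (W : Fin K → Fin K → ℝ) (γ μ : ℝ) (Θ : Fin K → ℝ) :
    Matrix {x // x ∈ suppB K W γ μ Θ} (Fin K) ℝ :=
  (Bmat K W γ μ).submatrix Subtype.val id

/-- The sign vector `sign((BΘ⋆)_{S_B})`. -/
noncomputable def signBS (K : ℕ) (W : Fin K → Fin K → ℝ) (γ μ : ℝ) (Θ : Fin K → ℝ) :
    {x // x ∈ suppB K W γ μ Θ} → ℝ :=
  fun r => Real.sign (((Bmat K W γ μ) *ᵥ Θ) r.val)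

/-
Write `c = γ / μ`. With unit weights, `M = B_{S_B:}ᵀ B_{S_B:}` equals `D + c² L`, where `D` is
the diagonal indicator of `S = supp Θ` and `L` is the Laplacian of the graph joining `k` and `l`
whenever `Θ k ≠ Θ l`. If `Θ u = 0`, the neighbours of `u` are exactly the elements of `S`, so
`L e_u = |S| e_u - 1_S`, while `M 1 = 1_S`. Hence `x = (1/|S|) 1 + (1/(|S| c²)) e_u` solves
`M x = e_u`, and `adj(M) M = det(M) I` shows that the `u`-th column of `adj(M)`, which by
symmetry is its `u`-th row, equals `det(M) x`.
-/

section Adjugate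

variable {n R : Type*} [Fintype n] [DecidableEq n] [CommRing R]

theorem Matrix.adjugate_apply_eq_det_mul_of_mulVec_eq_single {M : Matrix n n R} {x : n → R}
    {u : n} (h : M *ᵥ x = Pi.single u 1) (k : n) : adjugate M k u = M.det * x k := by
  have hcol := congrFun (congrArg (adjugate M *ᵥ ·) h) k
  simp only [mulVec_mulVec, adjugate_mul, smul_mulVec, one_mulVec, mulVec_single_one] at hcol
  exact hcol.symm

theorem Matrix.IsSymm.adjugate_apply_eq_det_mul_of_mulVec_eq_single {M : Matrix n n R}
    (hM : M.IsSymm) {x : n → R} {u : n} (h : M *ᵥ x = Pi.single u 1) (k : n) :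
    Matrix.adjugate M u k = M.det * x k := by
  rw [← transpose_apply (Matrix.adjugate M), adjugate_transpose, hM.eq]
  exact Matrix.adjugate_apply_eq_det_mul_of_mulVec_eq_single h k

end Adjugate

theorem Matrix.transpose_mul_self_submatrix_mulVec_apply {m n R : Type*} [Fintype n]
    [CommSemiring R] (B : Matrix m n R) (S : Finset m) (y : n → R) (v : n) :
    (((B.submatrix ((↑) : S → m) id)ᵀ * (B.submatrix (↑) id : Matrix S n R)) *ᵥ y) v =
      ∑ r ∈ S, B r v * (B *ᵥ y) r := by
  rw [← mulVec_mulVec]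
  exact Finset.sum_coe_sort S fun r => B r v * (B *ᵥ y) r

theorem Fintype.sum_pairs_lt {ι M : Type*} [Fintype ι] [LinearOrder ι] [AddCommMonoid M]
    (f : ι → ι → M) :
    ∑ p : {p : ι × ι // p.1 < p.2}, f p.1.1 p.1.2 =
      ∑ k, ∑ l, if k < l then f k l else 0 := by
  rw [← Finset.sum_subtype (Finset.univ.filter fun p : ι × ι => p.1 < p.2) (by simp)
      (fun p => f p.1 p.2), Finset.sum_filter, Fintype.sum_prod_type]

theorem sum_pairs_lt_incidence_eq_laplacian {ι R : Type*} [Fintype ι] [LinearOrder ι]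
    [CommRing R] (g : ι → ι → R) (hg : ∀ k l, g k l = g l k) (y : ι → R) (v : ι) :
    ∑ p : {p : ι × ι // p.1 < p.2}, g p.1.1 p.1.2 *
        ((if v = p.1.1 then 1 else 0) - (if v = p.1.2 then 1 else 0)) * (y p.1.1 - y p.1.2) =
      ∑ l, g v l * (y v - y l) := by
  set A : ι → R := fun l => g v l * (y v - y l)
  have hpair : ∀ k l : ι, (if k < l then g k l *
        ((if v = k then 1 else 0) - (if v = l then 1 else 0)) * (y k - y l) else 0) =
      (if k = v then (if v < l then A l else 0) else 0) +
        (if l = v then (if k < v then A k else 0) else 0) := by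
    intro k l
    by_cases hkl : k < l
    · by_cases hk : k = v
      · subst hk
        simp [A, hkl, hkl.ne]
      · by_cases hl : l = v
        · subst hl
          simp only [hkl, ↓reduceIte, hg k l, Ne.symm hk, zero_sub, mul_neg, mul_one, neg_mul, hk,
            zero_add, A]
          ring
        · simp [hkl, hk, hl, Ne.symm hk, Ne.symm hl]
    · split_ifs <;> simp_all
  rw [Fintype.sum_pairs_lt (fun k l => g k l *
      ((if v = k then 1 else 0) - (if v = l then 1 else 0)) * (y k - y l))]
  simp only [hpair, Finset.sum_add_distrib, Finset.sum_ite_eq', Finset.mem_univ, if_true]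
  rw [Finset.sum_comm]
  simp only [Finset.sum_ite_eq', Finset.mem_univ, if_true, ← Finset.sum_add_distrib]
  refine Finset.sum_congr rfl fun l _ => ?_
  rcases lt_trichotomy v l with h | rfl | h
  · simp [h, h.not_gt]
  · simp [A]
  · simp [h, h.not_gt]

section Bmat

variable {K : ℕ} {W : Fin K → Fin K → ℝ} {γ μ : ℝ}

theorem Bmat_inl_apply (hW : ∀ k l : Fin K, k < l → W k l = 1)
    (p : {p : Fin K × Fin K // p.1 < p.2}) (v : Fin K) :
    Bmat K W γ μ (Sum.inl p) v =
      γ / μ * ((if v = p.1.1 then 1 else 0) - (if v = p.1.2 then 1 else 0)) := by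
  have hne : p.1.1 ≠ p.1.2 := p.2.ne
  simp only [Bmat, of_apply, hW _ _ p.2, one_mul]
  split_ifs <;> simp_all

theorem Bmat_mulVec_inl (hW : ∀ k l : Fin K, k < l → W k l = 1) (y : Fin K → ℝ)
    (p : {p : Fin K × Fin K // p.1 < p.2}) :
    (Bmat K W γ μ *ᵥ y) (Sum.inl p) = γ / μ * (y p.1.1 - y p.1.2) := by
  simp [mulVec, dotProduct, Bmat_inl_apply hW, mul_sub, sub_mul, Finset.sum_sub_distrib, ite_mul]

theorem Bmat_inr_apply (k v : Fin K) :
    Bmat K W γ μ (Sum.inr k) v = if v = k then 1 else 0 := rfl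

theorem Bmat_mulVec_inr (y : Fin K → ℝ) (k : Fin K) :
    (Bmat K W γ μ *ᵥ y) (Sum.inr k) = y k := by
  simp [mulVec, dotProduct, Bmat_inr_apply]

theorem BmatS_transpose_mul_self_mulVec_apply (hW : ∀ k l : Fin K, k < l → W k l = 1)
    (Θ y : Fin K → ℝ) (v : Fin K) :
    (((BmatS K W γ μ Θ)ᵀ * BmatS K W γ μ Θ) *ᵥ y) v =
      (γ / μ) ^ 2 * ∑ l, (if Θ v ≠ Θ l then y v - y l else 0) +
        if Θ v ≠ 0 then y v else 0 := by
  rw [BmatS, transpose_mul_self_submatrix_mulVec_apply, suppB, Finset.sum_filter,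
    Fintype.sum_sum_type]
  congr 1
  · have hterm : ∀ p : {p : Fin K × Fin K // p.1 < p.2},
        (if (Bmat K W γ μ *ᵥ Θ) (Sum.inl p) ≠ 0 then
          Bmat K W γ μ (Sum.inl p) v * (Bmat K W γ μ *ᵥ y) (Sum.inl p) else 0) =
        (γ / μ) ^ 2 * ((if Θ p.1.1 ≠ Θ p.1.2 then 1 else 0) *
          ((if v = p.1.1 then 1 else 0) - (if v = p.1.2 then 1 else 0)) * (y p.1.1 - y p.1.2)) := by
      intro p
      rw [Bmat_mulVec_inl hW, Bmat_mulVec_inl hW, Bmat_inl_apply hW]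
      by_cases hc : γ / μ = 0
      · simp [hc]
      · by_cases hΘ : Θ p.1.1 = Θ p.1.2
        · simp [hΘ]
        · simp only [ne_eq, mul_eq_zero, hc, sub_eq_zero, hΘ, or_self, not_false_eq_true,
            ↓reduceIte, one_mul]
          ring
    rw [Finset.sum_congr rfl fun p _ => hterm p, ← Finset.mul_sum,
      sum_pairs_lt_incidence_eq_laplacian (fun k l => if Θ k ≠ Θ l then (1 : ℝ) else 0)
        (fun k l => by simp only [ne_comm])]
    simp only [ite_mul, one_mul, zero_mul]
  · rw [Fintype.sum_eq_single v fun k hk => by simp [Bmat_inr_apply, Ne.symm hk]]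
    simp [Bmat_mulVec_inr, Bmat_inr_apply]

theorem BmatS_transpose_mul_self_mulVec_eq_single (hW : ∀ k l : Fin K, k < l → W k l = 1)
    (hc : γ / μ ≠ 0) {Θ : Fin K → ℝ}
    (hs : ((Finset.univ.filter (fun k => Θ k ≠ 0)).card : ℝ) ≠ 0)
    {u : Fin K} (hu : Θ u = 0) :
    ((BmatS K W γ μ Θ)ᵀ * BmatS K W γ μ Θ) *ᵥ
        (fun k => 1 / (Finset.univ.filter (fun k => Θ k ≠ 0)).card + if k = u
          then 1 / ((Finset.univ.filter (fun k => Θ k ≠ 0)).card * (γ / μ) ^ 2) else 0) =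
      Pi.single u 1 := by
  set s : ℝ := ((Finset.univ.filter (fun k => Θ k ≠ 0)).card : ℝ)
  set c : ℝ := γ / μ with hc_def
  set x : Fin K → ℝ := fun k => 1 / s + if k = u then 1 / (s * c ^ 2) else 0
  funext v
  rw [BmatS_transpose_mul_self_mulVec_apply hW, ← hc_def]
  by_cases hv : v = u
  · subst hv
    have hsum : ∑ l, (if Θ v ≠ Θ l then x v - x l else 0) = s * (1 / (s * c ^ 2)) := by
      calc ∑ l, (if Θ v ≠ Θ l then x v - x l else 0)
          = ∑ l, if Θ l ≠ 0 then 1 / (s * c ^ 2) else 0 := by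
            refine Finset.sum_congr rfl fun l _ => ?_
            by_cases hl : l = v
            · simp [hl, hu]
            · simp [x, hl, hu, ne_comm]
        _ = s * (1 / (s * c ^ 2)) := by
            rw [Finset.sum_ite, Finset.sum_const_zero, add_zero, Finset.sum_const, nsmul_eq_mul]
    rw [hsum, hu]
    field_simp
    simp
  · have hsum : ∑ l, (if Θ v ≠ Θ l then x v - x l else 0) =
        if Θ v ≠ 0 then -(1 / (s * c ^ 2)) else 0 := by
      rw [Fintype.sum_eq_single u fun l hl => by simp [x, hl, hv]]
      simp [x, hv, hu]
    rw [hsum]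
    simp only [x, hv, if_false, add_zero, Pi.single_apply]
    split_ifs
    · field_simp
      ring
    · simp

end Bmat

/-- with all weights equal to 1 and `γ, μ > 0`, let `F` be the adjugate of
`B_{S_B:}ᵀB_{S_B:}` and `S = supp Θ⋆`. Then for every `u` with `Θ⋆_u = 0`:
`F_{uk} = det(B_{S_B:}ᵀB_{S_B:})/|S|` for `k ≠ u`, and
`F_{uu} = (1 + γ²/μ²)·det(B_{S_B:}ᵀB_{S_B:})/(|S|·γ²/μ²)`. -/
theorem adjugate_entries_zero_row
    (K : ℕ) (W : Fin K → Fin K → ℝ)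
    (hWone : ∀ k l : Fin K, k < l → W k l = 1)
    (μ γ : ℝ) (hμ : 0 < μ) (hγ : 0 < γ)
    (Θ : Fin K → ℝ) (hΘ : ∃ k, Θ k ≠ 0) :
    ∀ u : Fin K, Θ u = 0 →
      (∀ k : Fin K, k ≠ u →
        (Matrix.adjugate ((BmatS K W γ μ Θ)ᵀ * BmatS K W γ μ Θ)) u k =
          ((BmatS K W γ μ Θ)ᵀ * BmatS K W γ μ Θ).det /
            ((Finset.univ.filter (fun k => Θ k ≠ 0)).card : ℝ)) ∧
      (Matrix.adjugate ((BmatS K W γ μ Θ)ᵀ * BmatS K W γ μ Θ)) u u =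
        (1 + γ ^ 2 / μ ^ 2) * ((BmatS K W γ μ Θ)ᵀ * BmatS K W γ μ Θ).det /
          (((Finset.univ.filter (fun k => Θ k ≠ 0)).card : ℝ) * (γ ^ 2 / μ ^ 2)) := by
  intro u hu
  have hs : ((Finset.univ.filter (fun k => Θ k ≠ 0)).card : ℝ) ≠ 0 := by
    obtain ⟨k, hk⟩ := hΘ
    exact_mod_cast (Finset.card_pos.2 ⟨k, by simpa using hk⟩).ne'
  have hsymm : ((BmatS K W γ μ Θ)ᵀ * BmatS K W γ μ Θ).IsSymm := by
    rw [IsSymm, transpose_mul, transpose_transpose]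
  have hM := BmatS_transpose_mul_self_mulVec_eq_single hWone (div_ne_zero hγ.ne' hμ.ne') hs hu
  have hrow := hsymm.adjugate_apply_eq_det_mul_of_mulVec_eq_single hM
  refine ⟨fun k hk => ?_, ?_⟩
  · rw [hrow, if_neg hk]
    ring
  · rw [hrow, if_pos rfl]
    field_simp
    ring
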